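/- Let g be the morphism of the free monoid on {0,1} given by g: 0 ↦ 01, 1 ↦ 011; let k be the morphism from words over {0,1} to words over {0,1,2} given by k: 0 ↦ 01, 1 ↦ 2; let i be the morphism of the free monoid on {0,1,2} given by i: 0 ↦ 01, 1 ↦ 2, 2 ↦ 0122; and let ι be the inclusion morphism from words over {0,1} to words over {0,1,2} given by ι: 0 ↦ 0, 1 ↦ 1. Then for every n ≥ 0 and every word w over {0,1}, k(g^n(w)) = i^{n+1}(ι(w)). -/
import Mathlib

open FreeMonoid

/-- The morphism `g : 0 ↦ 01, 1 ↦ 011` on words over `{0,1}`. -/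
def gmor : FreeMonoid (Fin 2) →* FreeMonoid (Fin 2) :=
  FreeMonoid.lift fun i => if i = 0 then of 0 * of 1 else of 0 * of 1 * of 1

/-- The morphism `k : 0 ↦ 01, 1 ↦ 2` from words over `{0,1}` to words over `{0,1,2}`. -/
def kmor : FreeMonoid (Fin 2) →* FreeMonoid (Fin 3) :=
  FreeMonoid.lift fun i => if i = 0 then of 0 * of 1 else of 2

/-- The morphism `i : 0 ↦ 01, 1 ↦ 2, 2 ↦ 0122` on words over `{0,1,2}`. -/
def imor : FreeMonoid (Fin 3) →* FreeMonoid (Fin 3) :=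
  FreeMonoid.lift fun i =>
    if i = 0 then of 0 * of 1 else if i = 1 then of 2 else of 0 * of 1 * of 2 * of 2

/-- The inclusion morphism `ι : 0 ↦ 0, 1 ↦ 1` from words over `{0,1}` to words over
`{0,1,2}`. -/
def iotamor : FreeMonoid (Fin 2) →* FreeMonoid (Fin 3) :=
  FreeMonoid.lift fun i => if i = 0 then of 0 else of 1

lemma k_g_eq_i_k : kmor.comp gmor = imor.comp kmor := by
  apply FreeMonoid.hom_eq
  intro x
  fin_cases x <;> simp [gmor, kmor, imor]

lemma i_iota_eq_k : imor.comp iotamor = kmor := by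
  apply FreeMonoid.hom_eq
  intro x
  fin_cases x <;> simp [iotamor, kmor, imor]

/-- For every `n ≥ 0` and every word `w` over `{0,1}`: `k(gⁿ(w)) = iⁿ⁺¹(ι(w))`. -/
theorem k_g_pow_eq_i_pow_iota (n : ℕ) (w : FreeMonoid (Fin 2)) :
    kmor ((⇑gmor)^[n] w) = (⇑imor)^[n + 1] (iotamor w) := by
  induction n with
  | zero =>
    simpa using DFunLike.congr_fun i_iota_eq_k.symm w
  | succ n ih =>
    rw [Function.iterate_succ_apply']
    have : kmor (gmor ((⇑gmor)^[n] w)) = imor (kmor ((⇑gmor)^[n] w)) :=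
      DFunLike.congr_fun k_g_eq_i_k _
    rw [this, ih]; exact (Function.iterate_succ_apply' _ _ _).symm
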